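/- arXiv:2510.06817 — 3 statements merged into one kernel-verified Lean document; each statement's English description precedes it below -/
import Mathlib

section
/- The function g(x) = (2x)^{1/(x+1)} · (1 + 1/x) is strictly decreasing on the interval [1, ∞). -/
/-!
Since `1 + x⁻¹ = (x + 1) / x`, the logarithm of `(c x) ^ (1 / (x + 1)) * (1 + x⁻¹)` is
`log (c x) / (x + 1) + log (x + 1) - log x`, whose derivative simplifies to `-log (c x) / (x + 1) ^ 2`.
This is negative as soon as `c x > 1`, so for `c = 2` the function decreases on `[1/2, ∞)`.
-/

open Real Set

theorem hasDerivAt_mul_rpow_one_div_add_one_mul_one_add_inv {c x : ℝ} (hc : 0 < c) (hx : 0 < x) :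
    HasDerivAt (fun y : ℝ => (c * y) ^ (1 / (y + 1)) * (1 + y⁻¹))
      (-((c * x) ^ (1 / (x + 1)) * (1 + x⁻¹) * log (c * x) / (x + 1) ^ 2)) x := by
  have hcx : 0 < c * x := mul_pos hc hx
  have hx1 : x + 1 ≠ 0 := by positivity
  have hexponent : HasDerivAt (fun y : ℝ => 1 / (y + 1)) (-1 / (x + 1) ^ 2) x := by
    simpa using ((hasDerivAt_id' x).add_const 1).fun_inv hx1
  have hpow := ((hasDerivAt_id' x).const_mul c).rpow hexponent hcx
  refine (hpow.mul ((hasDerivAt_inv hx.ne').const_add 1)).congr_deriv ?_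
  rw [rpow_sub_one hcx.ne']
  field_simp
  ring

theorem strictAntiOn_mul_rpow_one_div_add_one_mul_one_add_inv {c : ℝ} (hc : 0 < c) :
    StrictAntiOn (fun x : ℝ => (c * x) ^ (1 / (x + 1)) * (1 + x⁻¹)) (Ici c⁻¹) := by
  have hpos : ∀ x ∈ Ici c⁻¹, 0 < x := fun x hx => (inv_pos.2 hc).trans_le hx
  refine strictAntiOn_of_deriv_neg (convex_Ici _) (fun x hx => ?_) fun x hx => ?_
  · exact (hasDerivAt_mul_rpow_one_div_add_one_mul_one_add_inv hc (hpos x hx)).continuousAt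
      |>.continuousWithinAt
  · rw [interior_Ici] at hx
    have hx0 : 0 < x := hpos x (mem_Ici_of_Ioi hx)
    rw [(hasDerivAt_mul_rpow_one_div_add_one_mul_one_add_inv hc hx0).deriv, neg_lt_zero]
    have hlog : 0 < log (c * x) := log_pos (by rwa [mem_Ioi, inv_lt_iff_one_lt_mul₀' hc] at hx)
    positivity

/-- The function g(x) = (2x)^{1/(x+1)} · (1 + 1/x) is strictly decreasing on [1, ∞). -/
theorem stmt_0 :
    StrictAntiOn (fun x : ℝ => (2 * x) ^ (1 / (x + 1)) * (1 + x⁻¹)) (Set.Ici (1 : ℝ)) :=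
  (strictAntiOn_mul_rpow_one_div_add_one_mul_one_add_inv two_pos).mono
    (Ici_subset_Ici.2 (by norm_num))
end

section
/- For every positive integer d and every real x > 4d·log(4d), one has (x+1)² > d·(x+2)·log(2x). Consequently the function h_d(x) = (x+2)·g(x)^d, where g(x) = (2x)^{1/(x+1)}(1+1/x), has positive logarithmic derivative for x > 4d·log(4d). -/
/-!
Writing `2x = (x / 4d) · 2 · 4d` and using `log t ≤ t - 1` gives `d log (2x) < x / 2` as soon as
`x > 4d log (4d)`, whence `d (x + 2) log (2x) < x (x + 2) < (x + 1)²`.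
For the second claim, `log h_d(y) = log (y + 2) + d (log (2y) / (y + 1) + log (1 + 1/y))`, and the
derivative `-1 / (x (x + 1))` of `log (1 + 1/x)` cancels the term `1 / (x (x + 1))` coming from
`log (2x) / (x + 1)`; hence `(log h_d)'(x) = 1 / (x + 2) - d log (2x) / (x + 1)²`, which is
positive by the first claim.
-/

open Real Topology

theorem four_mul_lt_of_four_mul_mul_log_lt {d x : ℝ} (hd : 1 ≤ d)
    (hx : 4 * d * log (4 * d) < x) : 4 * d < x := by
  have hlog4 : 1 < log 4 := by
    rw [lt_log_iff_exp_lt (by norm_num)]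
    linarith [exp_one_lt_d9]
  have hlog4d : 1 < log (4 * d) := hlog4.trans_le (log_le_log (by norm_num) (by linarith))
  nlinarith

theorem mul_log_two_mul_lt_half {d x : ℝ} (hd : 0 < d) (hx : 0 < x)
    (hxd : 4 * d * log (4 * d) < x) : d * log (2 * x) < x / 2 := by
  have hsplit : log (2 * x) = log (x / (4 * d)) + log 2 + log (4 * d) := by
    rw [← log_mul (by positivity) two_ne_zero, ← log_mul (by positivity) (by positivity)]
    congr 1
    field_simp
  have hratio : log (x / (4 * d)) ≤ x / (4 * d) - 1 := log_le_sub_one_of_pos (by positivity)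
  have hlog2 : log 2 < 1 := by linarith [log_two_lt_d9]
  have hcancel : d * (x / (4 * d)) = x / 4 := by field_simp
  rw [hsplit]
  nlinarith [mul_le_mul_of_nonneg_left hratio hd.le, mul_lt_mul_of_pos_left hlog2 hd]

theorem log_rpow_mul_one_add_inv {y : ℝ} (hy : 0 < y) :
    log ((2 * y) ^ (1 / (y + 1)) * (1 + y⁻¹)) =
      log (2 * y) / (y + 1) + (log (y + 1) - log y) := by
  rw [log_mul (by positivity) (by positivity), log_rpow (by positivity),
    show 1 + y⁻¹ = (y + 1) / y by field_simp, log_div (by positivity) hy.ne']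
  ring

theorem hasDerivAt_log_two_mul_div_add_log_div {x : ℝ} (hx : 0 < x) :
    HasDerivAt (fun y => log (2 * y) / (y + 1) + (log (y + 1) - log y))
      (-log (2 * x) / (x + 1) ^ 2) x := by
  have hlog2 : HasDerivAt (fun y => log (2 * y)) x⁻¹ x :=
    (((hasDerivAt_id' x).const_mul 2).log (by positivity)).congr_deriv (by field_simp)
  have hlog1 : HasDerivAt (fun y => log (y + 1)) (x + 1)⁻¹ x :=
    (((hasDerivAt_id' x).add_const 1).log (by positivity)).congr_deriv (one_div _)
  refine ((hlog2.fun_div ((hasDerivAt_id' x).add_const 1) (by positivity)).fun_add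
    (hlog1.fun_sub (hasDerivAt_log hx.ne'))).congr_deriv ?_
  field_simp
  ring

theorem deriv_log_add_two_mul_pow {x : ℝ} (hx : 0 < x) (d : ℕ) :
    deriv (fun y => log ((y + 2) * ((2 * y) ^ (1 / (y + 1)) * (1 + y⁻¹)) ^ d)) x
      = 1 / (x + 2) - d * log (2 * x) / (x + 1) ^ 2 := by
  have hlocal : (fun y => log ((y + 2) * ((2 * y) ^ (1 / (y + 1)) * (1 + y⁻¹)) ^ d))
      =ᶠ[𝓝 x] fun y => log (y + 2) + d * (log (2 * y) / (y + 1) + (log (y + 1) - log y)) := by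
    filter_upwards [eventually_gt_nhds hx] with y hy
    rw [log_mul (by positivity) (by positivity), log_pow, log_rpow_mul_one_add_inv hy]
  have hderiv := (((hasDerivAt_id' x).add_const 2).log (by positivity)).fun_add
    ((hasDerivAt_log_two_mul_div_add_log_div hx).const_mul (d : ℝ))
  rw [hlocal.deriv_eq, hderiv.deriv]
  ring

/-- For every positive integer d and real x > 4d·log(4d), (x+1)² > d·(x+2)·log(2x);
consequently h_d(x) = (x+2)·g(x)^d, with g(x) = (2x)^{1/(x+1)}(1+1/x), has positive
logarithmic derivative at x. -/
theorem stmt_3 (d : ℕ) (hd : 1 ≤ d) (x : ℝ) (hx : 4 * d * Real.log (4 * d) < x) :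
    (d : ℝ) * (x + 2) * Real.log (2 * x) < (x + 1) ^ 2 ∧
    0 < deriv (fun y : ℝ =>
      Real.log ((y + 2) * ((2 * y) ^ (1 / (y + 1)) * (1 + y⁻¹)) ^ d)) x := by
  have hd1 : (1 : ℝ) ≤ d := by exact_mod_cast hd
  have hx4 : 4 * (d : ℝ) < x := four_mul_lt_of_four_mul_mul_log_lt hd1 hx
  have hx0 : 0 < x := by linarith
  have hlog : 0 < log (2 * x) := log_pos (by linarith)
  have hkey := mul_log_two_mul_lt_half (by linarith) hx0 hx
  have hineq : (d : ℝ) * (x + 2) * log (2 * x) < (x + 1) ^ 2 := by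
    nlinarith
  refine ⟨hineq, ?_⟩
  rw [deriv_log_add_two_mul_pow hx0, sub_pos,
    div_lt_div_iff₀ (by positivity) (by positivity)]
  linarith
end

section
/- Comparable versus unit radii: let X be a normed space of dimension d, r > 0 and μ ≥ 1. Then every finite collection 𝒞 of closed balls in X with radii in [r, μr] admits a pairwise disjoint subcollection 𝒮 with |∪𝒮| ≥ μ^{-d}·γ(X)·|∪𝒞|; i.e., Γ(X; [r, μr]) ≥ μ^{-d}·γ(X). -/
/-!
Enlarge every ball of the collection to the common radius `m r`. By scale invariance, the
enlarged balls have a disjoint subfamily covering a fraction `γ(X)` of their union, which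
contains the original union. Shrinking the chosen balls back to the original ones (one per
center) keeps them disjoint and loses at most the factor `m^d` in measure per ball.
-/

open MeasureTheory Metric

/-- `ballsUnion μ C` is the measure of the union of the closed balls encoded (center, radius)
by the finite collection `C`. -/
noncomputable def ballsUnion {X : Type*} [NormedAddCommGroup X] [MeasurableSpace X]
    (μ : Measure X) (C : Finset (X × ℝ)) : ℝ :=
  (μ (⋃ p ∈ C, closedBall p.1 p.2)).toReal

/-- A collection of (center, radius) pairs encodes pairwise disjoint closed balls. -/
def DisjointBalls {X : Type*} [NormedAddCommGroup X] (S : Finset (X × ℝ)) : Prop :=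
  (S : Set (X × ℝ)).Pairwise fun p q => Disjoint (closedBall p.1 p.2) (closedBall q.1 q.2)

/-- `Phi μ C` is the largest fraction of the measure of the union of the balls of `C`
occupied by a pairwise disjoint subcollection of `C`. -/
noncomputable def Phi {X : Type*} [NormedAddCommGroup X] [MeasurableSpace X]
    (μ : Measure X) (C : Finset (X × ℝ)) : ℝ :=
  ⨆ S : {S : Finset (X × ℝ) // S ⊆ C ∧ DisjointBalls S},
    ballsUnion μ S.1 / ballsUnion μ C

/-- `vitaliGamma μ S` is the optimal Vitali covering constant `Γ(X; S)` for finite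
collections of closed balls with radii in `S`. -/
noncomputable def vitaliGamma {X : Type*} [NormedAddCommGroup X] [MeasurableSpace X]
    (μ : Measure X) (S : Set ℝ) : ℝ :=
  ⨅ C : {C : Finset (X × ℝ) // C.Nonempty ∧ ∀ p ∈ C, p.2 ∈ S}, Phi μ C.1

open scoped Pointwise

section Gamma

variable {X : Type*} [NormedAddCommGroup X] [MeasurableSpace X] (μ : Measure X)

lemma Phi_nonneg (C : Finset (X × ℝ)) : 0 ≤ Phi μ C :=
  Real.iSup_nonneg fun _ => div_nonneg ENNReal.toReal_nonneg ENNReal.toReal_nonneg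

lemma vitaliGamma_nonneg (R : Set ℝ) : 0 ≤ vitaliGamma μ R :=
  Real.iInf_nonneg fun _ => Phi_nonneg μ _

instance finite_disjointBalls_subset (C : Finset (X × ℝ)) :
    Finite {S : Finset (X × ℝ) // S ⊆ C ∧ DisjointBalls S} :=
  (C.powerset.finite_toSet.subset fun _ hS => Finset.mem_powerset.2 hS.1).to_subtype

instance nonempty_disjointBalls_subset (C : Finset (X × ℝ)) :
    Nonempty {S : Finset (X × ℝ) // S ⊆ C ∧ DisjointBalls S} :=
  ⟨⟨∅, C.empty_subset, by simp [DisjointBalls]⟩⟩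

lemma div_ballsUnion_le_Phi {C S : Finset (X × ℝ)} (hSC : S ⊆ C) (hS : DisjointBalls S) :
    ballsUnion μ S / ballsUnion μ C ≤ Phi μ C :=
  le_ciSup (f := fun S : {S // S ⊆ C ∧ DisjointBalls S} => ballsUnion μ S.1 / ballsUnion μ C)
    (Set.finite_range _).bddAbove ⟨S, hSC, hS⟩

theorem exists_disjointBalls_vitaliGamma_mul_le {R : Set ℝ} {C : Finset (X × ℝ)}
    (hC : ∀ p ∈ C, p.2 ∈ R) :
    ∃ S ⊆ C, DisjointBalls S ∧ vitaliGamma μ R * ballsUnion μ C ≤ ballsUnion μ S := by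
  rcases (ENNReal.toReal_nonneg : 0 ≤ ballsUnion μ C).eq_or_lt with h0 | hpos
  · exact ⟨∅, C.empty_subset, by simp [DisjointBalls], by simp [← h0, ballsUnion]⟩
  have hne : C.Nonempty := by
    contrapose! hpos
    simp [hpos]
  obtain ⟨S, hS⟩ := Finite.exists_max
    fun S : {S // S ⊆ C ∧ DisjointBalls S} => ballsUnion μ S.1 / ballsUnion μ C
  refine ⟨S.1, S.2.1, S.2.2, (le_div_iff₀ hpos).1 ?_⟩
  calc vitaliGamma μ R ≤ Phi μ C :=
        ciInf_le ⟨0, Set.forall_mem_range.2 fun _ => Phi_nonneg μ _⟩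
          (⟨C, hne, hC⟩ : {C : Finset (X × ℝ) // C.Nonempty ∧ ∀ p ∈ C, p.2 ∈ R})
    _ ≤ _ := ciSup_le hS

variable [ProperSpace X] [IsFiniteMeasureOnCompacts μ]

lemma measure_biUnion_closedBall_ne_top (C : Finset (X × ℝ)) :
    μ (⋃ p ∈ C, closedBall p.1 p.2) ≠ ⊤ :=
  (measure_biUnion_lt_top C.finite_toSet fun _ _ => measure_closedBall_lt_top).ne

lemma ballsUnion_pos [μ.IsOpenPosMeasure] {C : Finset (X × ℝ)} {p : X × ℝ} (hp : p ∈ C)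
    (hpos : 0 < p.2) : 0 < ballsUnion μ C :=
  ENNReal.toReal_pos ((measure_closedBall_pos μ p.1 hpos).trans_le <| measure_mono <|
    Set.subset_biUnion_of_mem (u := fun q : X × ℝ => closedBall q.1 q.2) hp).ne'
    (measure_biUnion_closedBall_ne_top μ C)

theorem le_vitaliGamma [μ.IsOpenPosMeasure] {R : Set ℝ} {c : ℝ} (hR : R.Nonempty)
    (hRpos : ∀ s ∈ R, 0 < s)
    (h : ∀ C : Finset (X × ℝ), (∀ p ∈ C, p.2 ∈ R) →
      ∃ S ⊆ C, DisjointBalls S ∧ c * ballsUnion μ C ≤ ballsUnion μ S) :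
    c ≤ vitaliGamma μ R := by
  obtain ⟨s, hs⟩ := hR
  have : Nonempty {C : Finset (X × ℝ) // C.Nonempty ∧ ∀ p ∈ C, p.2 ∈ R} :=
    ⟨⟨{(0, s)}, Finset.singleton_nonempty _, by simpa using hs⟩⟩
  refine le_ciInf fun ⟨C, ⟨p, hp⟩, hC⟩ => ?_
  obtain ⟨S, hSC, hS, hle⟩ := h C hC
  exact ((le_div_iff₀ (ballsUnion_pos μ hp (hRpos _ (hC p hp)))).2 hle).trans
    (div_ballsUnion_le_Phi μ hSC hS)

end Gamma

section Scaling

variable {X : Type*} [NormedAddCommGroup X] [NormedSpace ℝ X] {ρ : ℝ}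

lemma closedBall_smul_prod (hρ : 0 < ρ) (p : X × ℝ) :
    closedBall (ρ • p).1 (ρ • p).2 = ρ • closedBall p.1 p.2 := by
  rw [smul_closedBall' hρ.ne', Prod.smul_fst, Prod.smul_snd, smul_eq_mul,
    Real.norm_of_nonneg hρ.le]

variable [DecidableEq X]

lemma biUnion_closedBall_smul (hρ : 0 < ρ) (C : Finset (X × ℝ)) :
    ⋃ p ∈ ρ • C, closedBall p.1 p.2 = ρ • ⋃ p ∈ C, closedBall p.1 p.2 := by
  simp_rw [Finset.smul_finset_def, Finset.set_biUnion_finset_image, Set.smul_set_iUnion₂,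
    closedBall_smul_prod hρ]

lemma DisjointBalls.smul (hρ : 0 < ρ) {S : Finset (X × ℝ)} (hS : DisjointBalls S) :
    DisjointBalls (ρ • S) := by
  rintro _ hp _ hq hpq
  rw [Finset.coe_smul_finset] at hp hq
  obtain ⟨p, hp, rfl⟩ := hp
  obtain ⟨q, hq, rfl⟩ := hq
  rw [closedBall_smul_prod hρ, closedBall_smul_prod hρ, ← Set.image_smul, ← Set.image_smul]
  exact (Set.disjoint_image_iff (smul_right_injective X hρ.ne')).2
    (hS hp hq fun h => hpq (h ▸ rfl))

variable [MeasurableSpace X] [BorelSpace X] [FiniteDimensional ℝ X] (μ : Measure X)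
  [μ.IsAddHaarMeasure]

lemma ballsUnion_smul (hρ : 0 < ρ) (C : Finset (X × ℝ)) :
    ballsUnion μ (ρ • C) = ρ ^ Module.finrank ℝ X * ballsUnion μ C := by
  rw [ballsUnion, biUnion_closedBall_smul hρ, Measure.addHaar_smul_of_nonneg μ hρ.le,
    ENNReal.toReal_mul, ENNReal.toReal_ofReal (by positivity), ballsUnion]

theorem exists_disjointBalls_of_forall_radius_eq (hρ : 0 < ρ) {C : Finset (X × ℝ)}
    (hC : ∀ p ∈ C, p.2 = ρ) :
    ∃ S ⊆ C, DisjointBalls S ∧ vitaliGamma μ {1} * ballsUnion μ C ≤ ballsUnion μ S := by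
  obtain ⟨S, hSC, hS, hle⟩ :=
      exists_disjointBalls_vitaliGamma_mul_le μ (R := {1}) (C := ρ⁻¹ • C) <| by
    simp only [Finset.mem_smul_finset, Set.mem_singleton_iff]
    rintro _ ⟨p, hp, rfl⟩
    simp [hC p hp, hρ.ne']
  refine ⟨ρ • S, ?_, hS.smul hρ, ?_⟩
  · simpa [smul_inv_smul₀ hρ.ne'] using Finset.smul_finset_subset_smul_finset (a := ρ) hSC
  · rw [← smul_inv_smul₀ hρ.ne' C, ballsUnion_smul μ hρ, ballsUnion_smul μ hρ, mul_left_comm]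
    gcongr

end Scaling

section Comparable

variable {X : Type*} [NormedAddCommGroup X] [NormedSpace ℝ X] [MeasurableSpace X]
  [BorelSpace X] [FiniteDimensional ℝ X] (μ : Measure X) [μ.IsAddHaarMeasure]

lemma addHaar_real_closedBall_le_pow_mul (x y : X) {s t m : ℝ} (hs : 0 ≤ s) (ht : 0 ≤ t)
    (hts : t ≤ m * s) :
    μ.real (closedBall y t) ≤ m ^ Module.finrank ℝ X * μ.real (closedBall x s) := by
  rw [Measure.addHaar_real_closedBall μ y ht, Measure.addHaar_real_closedBall μ x hs,
    ← mul_assoc, ← mul_pow]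
  gcongr

theorem exists_disjointBalls_ballsUnion_le_pow_mul [DecidableEq X] {ρ m : ℝ}
    {C : Finset (X × ℝ)} (hC : ∀ p ∈ C, 0 ≤ p.2 ∧ p.2 ≤ ρ ∧ ρ ≤ m * p.2)
    {S' : Finset (X × ℝ)} (hS'C : S' ⊆ C.image fun p => (p.1, ρ)) (hS' : DisjointBalls S') :
    ∃ S ⊆ C, DisjointBalls S ∧ ballsUnion μ S' ≤ m ^ Module.finrank ℝ X * ballsUnion μ S := by
  -- one original ball below each chosen enlarged ball
  obtain ⟨S, hSC, hinj, rfl⟩ := Finset.exists_subset_injOn_image_eq_of_surjOn (C : Set (X × ℝ))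
    S' (by simpa [Set.SurjOn, ← Finset.coe_image] using hS'C)
  replace hSC : S ⊆ C := Finset.coe_subset.1 hSC
  have hball (p) (hp : p ∈ S) : closedBall p.1 p.2 ⊆ closedBall p.1 ρ :=
    closedBall_subset_closedBall (hC p (hSC hp)).2.1
  have hS : DisjointBalls S := fun p hp q hq hpq =>
    (hS' (Finset.mem_image_of_mem _ hp) (Finset.mem_image_of_mem _ hq)
      (hinj.ne hp hq hpq)).mono (hball p hp) (hball q hq)
  refine ⟨S, hSC, hS, ?_⟩
  calc ballsUnion μ (S.image fun p => (p.1, ρ))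
      ≤ ∑ q ∈ S.image (fun p => (p.1, ρ)), μ.real (closedBall q.1 q.2) :=
        measureReal_biUnion_finset_le _ _
    _ = ∑ p ∈ S, μ.real (closedBall p.1 ρ) := Finset.sum_image hinj
    _ ≤ ∑ p ∈ S, m ^ Module.finrank ℝ X * μ.real (closedBall p.1 p.2) :=
        Finset.sum_le_sum fun p hp => addHaar_real_closedBall_le_pow_mul μ _ _
          (hC p (hSC hp)).1 ((hC p (hSC hp)).1.trans (hC p (hSC hp)).2.1) (hC p (hSC hp)).2.2
    _ = m ^ Module.finrank ℝ X * ballsUnion μ S := by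
      rw [← Finset.mul_sum, ballsUnion, ← Measure.real,
        measureReal_biUnion_finset hS (fun _ _ => measurableSet_closedBall)
          fun _ _ => measure_closedBall_lt_top.ne]

theorem exists_disjointBalls_of_radius_mem_Icc {r m : ℝ} (hr : 0 < r) (hm : 0 < m)
    {C : Finset (X × ℝ)} (hC : ∀ p ∈ C, p.2 ∈ Set.Icc r (m * r)) :
    ∃ S ⊆ C, DisjointBalls S ∧
      m⁻¹ ^ Module.finrank ℝ X * vitaliGamma μ {1} * ballsUnion μ C ≤ ballsUnion μ S := by
  classical
  set C' := C.image fun p => (p.1, m * r)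
  obtain ⟨S', hS'C', hS', hγ⟩ :=
    exists_disjointBalls_of_forall_radius_eq μ (mul_pos hm hr) (C := C') fun _ hq => by
      obtain ⟨p, -, rfl⟩ := Finset.mem_image.1 hq
      rfl
  obtain ⟨S, hSC, hS, hle⟩ := exists_disjointBalls_ballsUnion_le_pow_mul μ
    (fun p hp => ⟨hr.le.trans (hC p hp).1, (hC p hp).2, by gcongr; exact (hC p hp).1⟩)
    hS'C' hS'
  have hCC' : ballsUnion μ C ≤ ballsUnion μ C' :=
    measureReal_mono (Set.iUnion₂_subset fun p hp =>
      (closedBall_subset_closedBall (hC p hp).2).trans <|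
        Set.subset_biUnion_of_mem (u := fun q : X × ℝ => closedBall q.1 q.2)
          (Finset.mem_image_of_mem (fun p => (p.1, m * r)) hp))
      (measure_biUnion_closedBall_ne_top μ C')
  have hγ0 := vitaliGamma_nonneg μ {1}
  refine ⟨S, hSC, hS, ?_⟩
  calc m⁻¹ ^ Module.finrank ℝ X * vitaliGamma μ {1} * ballsUnion μ C
      ≤ m⁻¹ ^ Module.finrank ℝ X * (vitaliGamma μ {1} * ballsUnion μ C') := by
        rw [mul_assoc]; gcongr
    _ ≤ m⁻¹ ^ Module.finrank ℝ X * (m ^ Module.finrank ℝ X * ballsUnion μ S) :=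
        mul_le_mul_of_nonneg_left (hγ.trans hle) (by positivity)
    _ = ballsUnion μ S := by
        rw [← mul_assoc, ← mul_pow, inv_mul_cancel₀ hm.ne', one_pow, one_mul]

end Comparable

/-- Comparable versus unit radii: if `X` has dimension `d`, `r > 0` and `m ≥ 1`, then every
finite collection of closed balls with radii in `[r, mr]` admits a pairwise disjoint
subcollection occupying a fraction `m^{-d}·γ(X)` of the measure of its union; in
particular `Γ(X; [r, mr]) ≥ m^{-d}·γ(X)`. -/
theorem stmt_12 {X : Type*} [NormedAddCommGroup X] [NormedSpace ℝ X] [FiniteDimensional ℝ X]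
    [MeasurableSpace X] [BorelSpace X] (μ : Measure X) [μ.IsAddHaarMeasure]
    (d : ℕ) (hd : Module.finrank ℝ X = d) (r m : ℝ) (hr : 0 < r) (hm : 1 ≤ m) :
    (∀ C : Finset (X × ℝ), (∀ p ∈ C, p.2 ∈ Set.Icc r (m * r)) →
      ∃ S ⊆ C, DisjointBalls S ∧
        m⁻¹ ^ d * vitaliGamma μ {1} * ballsUnion μ C ≤ ballsUnion μ S) ∧
    m⁻¹ ^ d * vitaliGamma μ {1} ≤ vitaliGamma μ (Set.Icc r (m * r)) := by
  subst hd
  have hcomp := fun C => exists_disjointBalls_of_radius_mem_Icc μ hr (one_pos.trans_le hm)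
    (C := C)
  exact ⟨hcomp, le_vitaliGamma μ ⟨r, le_rfl, le_mul_of_one_le_left hr.le hm⟩
    (fun _ hs => hr.trans_le hs.1) hcomp⟩
end
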